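/- arXiv:1408.4201 — 8 statements merged into one kernel-verified Lean document; each statement's English description precedes it below -/
import Mathlib

section
/- Let φ : M → M̂ be a topological embedding, let U be a nonempty open subset of M, and let B be a boundary set of the envelopment (a nonempty subset of the frontier ∂(φ(M)) = closure(φ(M)) \ φ(M)). If B is attached to U (every open set of M̂ containing B has nonempty intersection with φ(U)), then there exists a point p ∈ B such that p is attached to U (every open neighbourhood of p in M̂ has nonempty intersection with φ(U)). -/
/-- If a boundary set `B` of the envelopment `(M, Mhat, φ)` is attached to a nonempty
open set `U ⊆ M`, then some boundary point `p ∈ B` is attached to `U`. -/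
theorem exists_attached_point_of_attached_boundary_set
    {M Mhat : Type*} [TopologicalSpace M] [TopologicalSpace Mhat]
    (φ : M → Mhat) (hφ : Topology.IsEmbedding φ)
    (U : Set M) (hUopen : IsOpen U) (hUne : U.Nonempty)
    (B : Set Mhat) (hBne : B.Nonempty)
    (hBbd : B ⊆ closure (Set.range φ) \ Set.range φ)
    (hatt : ∀ N : Set Mhat, IsOpen N → B ⊆ N → (N ∩ φ '' U).Nonempty) :
    ∃ p ∈ B, ∀ N : Set Mhat, IsOpen N → p ∈ N → (N ∩ φ '' U).Nonempty := by
  by_contra h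
  push_neg at h
  choose N hNopen hpN hNempty using fun p (hp : p ∈ B) => h p hp
  set W : Set Mhat := ⋃ p : B, N p p.2 with hW
  have hWopen : IsOpen W := isOpen_iUnion fun p => hNopen p p.2
  have hBW : B ⊆ W := fun p hp => Set.mem_iUnion.2 ⟨⟨p, hp⟩, hpN p hp⟩
  obtain ⟨x, hxW, hxU⟩ := hatt W hWopen hBW
  obtain ⟨p, hx⟩ := Set.mem_iUnion.1 hxW
  exact Set.eq_empty_iff_forall_notMem.1 (hNempty p p.2) x ⟨hx, hxU⟩
end

section
/- Let φ : M → M̂ and φ' : M → M̂' be topological embeddings of the same space M, let U ⊆ M be open, let B ⊆ ∂(φ(M)) be a boundary set attached to U, and let B' ⊆ ∂(φ'(M)) be a boundary set of the second envelopment. If B' covers B, then B' is also attached to the open set U. -/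
/-- If a boundary set `B ⊆ ∂(φ(M))` is attached to an open set `U ⊆ M` and a boundary
set `B' ⊆ ∂(φ'(M))` of a second envelopment covers `B`, then `B'` is also attached
to `U`. -/
theorem attached_of_covers
    {M Mhat Mhat' : Type*} [TopologicalSpace M] [TopologicalSpace Mhat] [TopologicalSpace Mhat']
    (φ : M → Mhat) (hφ : Topology.IsEmbedding φ)
    (φ' : M → Mhat') (hφ' : Topology.IsEmbedding φ')
    (U : Set M) (hUopen : IsOpen U)
    (B : Set Mhat) (hBne : B.Nonempty)
    (hBbd : B ⊆ closure (Set.range φ) \ Set.range φ)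
    (B' : Set Mhat') (hB'ne : B'.Nonempty)
    (hB'bd : B' ⊆ closure (Set.range φ') \ Set.range φ')
    -- `B` is attached to `U`:
    (hatt : ∀ N : Set Mhat, IsOpen N → B ⊆ N → (N ∩ φ '' U).Nonempty)
    -- `B'` covers `B`: for every open neighbourhood `N'` of `B'` in `Mhat'` there is an
    -- open neighbourhood `N` of `B` in `Mhat` with `φ' (φ⁻¹ (N ∩ φ(M))) ⊆ N'`:
    (hcov : ∀ N' : Set Mhat', IsOpen N' → B' ⊆ N' →
      ∃ N : Set Mhat, IsOpen N ∧ B ⊆ N ∧ φ' '' (φ ⁻¹' N) ⊆ N') :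
    ∀ N' : Set Mhat', IsOpen N' → B' ⊆ N' → (N' ∩ φ' '' U).Nonempty := by
  intro N' hN'open hB'N'
  obtain ⟨N, hNopen, hBN, hsub⟩ := hcov N' hN'open hB'N'
  obtain ⟨x, hxN, u, huU, rfl⟩ := hatt N hNopen hBN
  exact ⟨φ' u, hsub ⟨u, hxN, rfl⟩, u, huU, rfl⟩
end

section
/- The relation ~ on boundary sets of envelopments of a fixed manifold M, defined by B ~ B' if and only if B covers B' and B' covers B, is an equivalence relation. In particular, the covering relation is reflexive (every boundary set covers itself) and transitive: if B, B', B'' are boundary sets of envelopments φ : M → M̂, φ' : M → M̂', φ'' : M → M̂'' respectively, and B covers B' and B' covers B'', then B covers B''. -/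
open scoped Manifold
open Topology

/-- An envelopment of the `n`-dimensional, paracompact, connected, Hausdorff, smooth
manifold `M`: a `C^∞` embedding of `M` into a smooth `n`-manifold with the same properties. -/
structure Envelopment (n : ℕ) (M : Type) [TopologicalSpace M]
    [ChartedSpace (EuclideanSpace ℝ (Fin n)) M] : Type 1 where
  carrier : Type
  [top : TopologicalSpace carrier]
  [cs : ChartedSpace (EuclideanSpace ℝ (Fin n)) carrier]
  [sm : IsManifold (𝓡 n) (⊤ : ℕ∞) carrier]
  [t2 : T2Space carrier]
  [para : ParacompactSpace carrier]
  [conn : ConnectedSpace carrier]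
  embMap : M → carrier
  isEmbedding : Topology.IsEmbedding embMap
  contMDiff : ContMDiff (𝓡 n) (𝓡 n) (⊤ : ℕ∞) embMap

attribute [instance] Envelopment.top Envelopment.cs Envelopment.sm
  Envelopment.t2 Envelopment.para Envelopment.conn

variable {n : ℕ} {M : Type} [TopologicalSpace M]
  [ChartedSpace (EuclideanSpace ℝ (Fin n)) M]

/-- The set of boundary points `∂(φ(M)) = closure (φ(M)) \ φ(M)` of an envelopment. -/
def Envelopment.bdry (e : Envelopment n M) : Set e.carrier :=
  closure (Set.range e.embMap) \ Set.range e.embMap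

/-- A boundary set: a nonempty subset of the set of boundary points of some envelopment. -/
structure BoundarySet (n : ℕ) (M : Type) [TopologicalSpace M]
    [ChartedSpace (EuclideanSpace ℝ (Fin n)) M] : Type 1 where
  env : Envelopment n M
  B : Set env.carrier
  nonempty : B.Nonempty
  subset_bdry : B ⊆ env.bdry

/-- `Covers b b'`: for every open neighbourhood `N` of `b.B` there is an open
neighbourhood `N'` of `b'.B` with `φ (φ'⁻¹ (N' ∩ φ'(M))) ⊆ N`. -/
def Covers (b b' : BoundarySet n M) : Prop :=
  ∀ N : Set b.env.carrier, IsOpen N → b.B ⊆ N →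
    ∃ N' : Set b'.env.carrier, IsOpen N' ∧ b'.B ⊆ N' ∧
      b.env.embMap '' (b'.env.embMap ⁻¹' N') ⊆ N

/-- Two boundary sets are equivalent if each covers the other. -/
def BEquiv (b b' : BoundarySet n M) : Prop := Covers b b' ∧ Covers b' b

/-- A boundary set whose underlying set is a singleton `{p}`. -/
def BoundarySet.IsSingletonRep (b : BoundarySet n M) : Prop := ∃ p, b.B = {p}

/-- The abstract boundary `B(M)`: equivalence classes of boundary sets (under mutual
covering) which possess a singleton representative. -/
def AbstractBoundary (n : ℕ) (M : Type) [TopologicalSpace M]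
    [ChartedSpace (EuclideanSpace ℝ (Fin n)) M] : Type 1 :=
  {q : Quot (@BEquiv n M _ _) // ∃ b : BoundarySet n M,
    b.IsSingletonRep ∧ Quot.mk BEquiv b = q}

/-- A boundary set `B` is attached to an open set `U ⊆ M` if every open neighbourhood
of `B` in the enveloping manifold meets `φ(U)`. -/
def BoundarySet.Attached (b : BoundarySet n M) (U : Set M) : Prop :=
  ∀ N : Set b.env.carrier, IsOpen N → b.B ⊆ N → (N ∩ b.env.embMap '' U).Nonempty

/-- An abstract boundary point `[p]` is attached to the open set `U ⊆ M` if a singleton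
boundary point representative `p` of it is attached to `U` (this is independent of the
chosen representative). -/
def AbstractBoundary.Attached (q : AbstractBoundary n M) (U : Set M) : Prop :=
  ∃ b : BoundarySet n M, b.IsSingletonRep ∧ Quot.mk BEquiv b = q.1 ∧ b.Attached U

/-- The basis `𝒱` for the attached point topology on `M̄ = M ⊕ B(M)`: all sets
`U ∪ B_U` with `U` a nonempty open subset of `M` and `B_U` the set of all abstract
boundary points attached to `U`, together with all subsets `C ⊆ B(M)`. -/
def basisSets (n : ℕ) (M : Type) [TopologicalSpace M]
    [ChartedSpace (EuclideanSpace ℝ (Fin n)) M] :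
    Set (Set (M ⊕ AbstractBoundary n M)) :=
  {A | ∃ U : Set M, IsOpen U ∧ U.Nonempty ∧
      A = Sum.inl '' U ∪ Sum.inr '' {q : AbstractBoundary n M | q.Attached U}} ∪
  {A | ∃ C : Set (AbstractBoundary n M), A = Sum.inr '' C}

/-- The attached point topology on `M̄ = M ⊕ B(M)`: the topology generated by the
basis `𝒱`. -/
def attachedTopology (n : ℕ) (M : Type) [TopologicalSpace M]
    [ChartedSpace (EuclideanSpace ℝ (Fin n)) M] :
    TopologicalSpace (M ⊕ AbstractBoundary n M) :=
  TopologicalSpace.generateFrom (basisSets n M)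

/-- The relation `B ~ B'` (mutual covering) on boundary sets of envelopments of a fixed
manifold `M` is an equivalence relation; in particular the covering relation is
reflexive and transitive. -/
theorem bequiv_is_equivalence (n : ℕ) (M : Type) [TopologicalSpace M]
    [ChartedSpace (EuclideanSpace ℝ (Fin n)) M] [IsManifold (𝓡 n) (⊤ : ℕ∞) M]
    [T2Space M] [ParacompactSpace M] [ConnectedSpace M] :
    Equivalence (@BEquiv n M _ _) ∧
    (∀ b : BoundarySet n M, Covers b b) ∧
    (∀ b b' b'' : BoundarySet n M, Covers b b' → Covers b' b'' → Covers b b'') := by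

  have refl : ∀ b : BoundarySet n M, Covers b b := by
    intro b N hN hBN
    exact ⟨N, hN, hBN, by rintro x ⟨y, hy, rfl⟩; exact hy⟩
  have trans : ∀ b b' b'' : BoundarySet n M,
      Covers b b' → Covers b' b'' → Covers b b'' := by
    intro b b' b'' h1 h2 N hN hBN
    obtain ⟨N', hN', hB'N', hsub⟩ := h1 N hN hBN
    obtain ⟨N'', hN'', hB''N'', hsub'⟩ := h2 N' hN' hB'N'
    refine ⟨N'', hN'', hB''N'', ?_⟩
    rintro x ⟨y, hy, rfl⟩
    exact hsub ⟨y, hsub' ⟨y, hy, rfl⟩, rfl⟩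
  refine ⟨⟨fun b => ⟨refl b, refl b⟩, fun h => ⟨h.2, h.1⟩,
    fun h h' => ⟨trans _ _ _ h.1 h'.1, trans _ _ _ h'.2 h.2⟩⟩, refl, trans⟩
end

section
/- Let M be an n-dimensional, paracompact, connected, Hausdorff, smooth manifold with abstract boundary B(M) and M̄ = M ∪ B(M) equipped with the attached point topology. Then the sets M and B(M) are each both open and closed in M̄. -/
open scoped Manifold
open Topology

variable {n : ℕ} {M : Type} [TopologicalSpace M]
  [ChartedSpace (EuclideanSpace ℝ (Fin n)) M]

lemma exists_open_no_attached {n : ℕ} {M : Type} [TopologicalSpace M]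
    [ChartedSpace (EuclideanSpace ℝ (Fin n)) M] [T2Space M] (x : M) :
    ∃ U : Set M, IsOpen U ∧ x ∈ U ∧
      ∀ q : AbstractBoundary n M, ¬ q.Attached U := by
  have : LocallyCompactSpace M :=
    ChartedSpace.locallyCompactSpace (EuclideanSpace ℝ (Fin n)) M
  obtain ⟨K, hKc, hKn⟩ := exists_compact_mem_nhds x
  refine ⟨interior K, isOpen_interior, mem_interior_iff_mem_nhds.mpr hKn, ?_⟩
  rintro q ⟨b, ⟨p, hBp⟩, -, hatt⟩
  have hp : p ∈ b.env.bdry := b.subset_bdry (by rw [hBp]; exact rfl)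
  have hcl : IsClosed (b.env.embMap '' K) :=
    (hKc.image b.env.isEmbedding.continuous).isClosed
  have hpN : p ∈ (b.env.embMap '' K)ᶜ := fun h => hp.2 (Set.image_subset_range _ _ h)
  obtain ⟨y, hy1, hy2⟩ := hatt _ hcl.isOpen_compl
    (by rw [hBp]; exact Set.singleton_subset_iff.mpr hpN)
  exact hy1 (Set.image_mono interior_subset hy2)

/-- In the attached point topology on `M̄ = M ∪ B(M)`, the sets `M` and `B(M)` are
each both open and closed. -/
theorem manifold_and_boundary_clopen (n : ℕ) (M : Type) [TopologicalSpace M]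
    [ChartedSpace (EuclideanSpace ℝ (Fin n)) M] [IsManifold (𝓡 n) (⊤ : ℕ∞) M]
    [T2Space M] [ParacompactSpace M] [ConnectedSpace M] :
    IsOpen[attachedTopology n M]
      (Set.range (Sum.inl : M → M ⊕ AbstractBoundary n M)) ∧
    IsClosed[attachedTopology n M]
      (Set.range (Sum.inl : M → M ⊕ AbstractBoundary n M)) ∧
    IsOpen[attachedTopology n M]
      (Set.range (Sum.inr : AbstractBoundary n M → M ⊕ AbstractBoundary n M)) ∧
    IsClosed[attachedTopology n M]
      (Set.range (Sum.inr : AbstractBoundary n M → M ⊕ AbstractBoundary n M)) := by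
  letI := attachedTopology n M
  have hr_inr : IsOpen (Set.range (Sum.inr : AbstractBoundary n M → M ⊕ AbstractBoundary n M)) :=
    TopologicalSpace.GenerateOpen.basic _ (Or.inr ⟨Set.univ, by rw [Set.image_univ]⟩)
  have hr_inl : IsOpen (Set.range (Sum.inl : M → M ⊕ AbstractBoundary n M)) := by
    choose U hUo hxU hUnot using fun x : M => exists_open_no_attached (n := n) x
    have heq : Set.range (Sum.inl : M → M ⊕ AbstractBoundary n M) =
        ⋃ x : M, (Sum.inl '' U x ∪
          Sum.inr '' {q : AbstractBoundary n M | q.Attached (U x)}) := by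
      ext z
      constructor
      · rintro ⟨x, rfl⟩
        exact Set.mem_iUnion.mpr ⟨x, Or.inl ⟨x, hxU x, rfl⟩⟩
      · intro hz
        obtain ⟨x, hz⟩ := Set.mem_iUnion.mp hz
        rcases hz with ⟨y, _, rfl⟩ | ⟨q, hq, rfl⟩
        · exact ⟨y, rfl⟩
        · exact absurd hq (hUnot x q)
    rw [heq]
    exact isOpen_iUnion fun x =>
      TopologicalSpace.GenerateOpen.basic _ (Or.inl ⟨U x, hUo x, ⟨x, hxU x⟩, rfl⟩)
  refine ⟨hr_inl, ?_, hr_inr, ?_⟩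
  · rw [← isOpen_compl_iff, Set.compl_range_inl]; exact hr_inr
  · rw [← isOpen_compl_iff, Set.compl_range_inr]; exact hr_inl
end

section
/- Let M be an n-dimensional, paracompact, connected, Hausdorff, smooth manifold with abstract boundary B(M) and M̄ = M ∪ B(M) equipped with the attached point topology. Then the inclusion map i : M → M̄, i(p) = p, where M carries its manifold topology, is a topological embedding (a homeomorphism of M onto i(M) with the subspace topology from M̄). -/
open scoped Manifold
open Topology

variable {n : ℕ} {M : Type} [TopologicalSpace M]
  [ChartedSpace (EuclideanSpace ℝ (Fin n)) M]

/-- The inclusion map `i : M → M̄`, `i(p) = p`, from `M` with its manifold topology to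
`M̄ = M ∪ B(M)` with the attached point topology, is a topological embedding. -/
theorem inclusion_isEmbedding (n : ℕ) (M : Type) [TopologicalSpace M]
    [ChartedSpace (EuclideanSpace ℝ (Fin n)) M] [IsManifold (𝓡 n) (⊤ : ℕ∞) M]
    [T2Space M] [ParacompactSpace M] [ConnectedSpace M] :
    @Topology.IsEmbedding M (M ⊕ AbstractBoundary n M) _ (attachedTopology n M)
      Sum.inl := by
  letI := attachedTopology n M
  refine ⟨⟨?_⟩, Sum.inl_injective⟩
  show _ = TopologicalSpace.induced Sum.inl (TopologicalSpace.generateFrom (basisSets n M))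
  rw [induced_generateFrom_eq]
  refine le_antisymm (le_generateFrom ?_) (fun s hs => ?_)
  · rintro s ⟨A, hA, rfl⟩
    rcases hA with ⟨U, hU, -, rfl⟩ | ⟨C, rfl⟩
    · have : Sum.inl ⁻¹' (Sum.inl '' U ∪ Sum.inr '' {q : AbstractBoundary n M | q.Attached U}) = U := by
        simp [Set.preimage_union, Set.preimage_image_eq _ Sum.inl_injective]
      rw [this]; exact hU
    · have : (Sum.inl ⁻¹' (Sum.inr '' C) : Set M) = ∅ := by simp
      rw [this]; exact isOpen_empty
  · rcases s.eq_empty_or_nonempty with rfl | hne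
    · exact @isOpen_empty _ (TopologicalSpace.generateFrom _)
    · exact TopologicalSpace.GenerateOpen.basic s
        ⟨Sum.inl '' s ∪ Sum.inr '' {q : AbstractBoundary n M | q.Attached s},
          Or.inl ⟨s, hs, hne, rfl⟩, by
            simp [Set.preimage_union, Set.preimage_image_eq _ Sum.inl_injective]⟩
end

section
/- Let M be an n-dimensional, paracompact, connected, Hausdorff, smooth manifold with abstract boundary B(M) and M̄ = M ∪ B(M) equipped with the attached point topology, and let i : M → M̄ be the inclusion map. Then i(M) is both open and closed in M̄, the closure of i(M) in M̄ equals i(M), the topological frontier ∂(i(M)) in M̄ is empty, and if B(M) is nonempty then closure(i(M)) ≠ M̄. -/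
open scoped Manifold
open Topology

variable {n : ℕ} {M : Type} [TopologicalSpace M]
  [ChartedSpace (EuclideanSpace ℝ (Fin n)) M]

/-- For the inclusion map `i : M → M̄` into `M̄ = M ∪ B(M)` with the attached point
topology: `i(M)` is both open and closed, `closure (i(M)) = i(M)`, the frontier
`∂(i(M))` is empty, and if `B(M) ≠ ∅` then `closure (i(M)) ≠ M̄`. -/
theorem inclusion_image_properties (n : ℕ) (M : Type) [TopologicalSpace M]
    [ChartedSpace (EuclideanSpace ℝ (Fin n)) M] [IsManifold (𝓡 n) (⊤ : ℕ∞) M]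
    [T2Space M] [ParacompactSpace M] [ConnectedSpace M] :
    IsOpen[attachedTopology n M]
      (Set.range (Sum.inl : M → M ⊕ AbstractBoundary n M)) ∧
    IsClosed[attachedTopology n M]
      (Set.range (Sum.inl : M → M ⊕ AbstractBoundary n M)) ∧
    @closure _ (attachedTopology n M)
        (Set.range (Sum.inl : M → M ⊕ AbstractBoundary n M)) =
      Set.range (Sum.inl : M → M ⊕ AbstractBoundary n M) ∧
    @frontier _ (attachedTopology n M)
        (Set.range (Sum.inl : M → M ⊕ AbstractBoundary n M)) = ∅ ∧
    (Nonempty (AbstractBoundary n M) →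
      @closure _ (attachedTopology n M)
          (Set.range (Sum.inl : M → M ⊕ AbstractBoundary n M)) ≠ Set.univ) := by
  letI : TopologicalSpace (M ⊕ AbstractBoundary n M) := attachedTopology n M
  haveI : LocallyCompactSpace M := ChartedSpace.locallyCompactSpace (EuclideanSpace ℝ (Fin n)) M
  have hopen : IsOpen (Set.range (Sum.inl : M → M ⊕ AbstractBoundary n M)) := by
    rw [isOpen_iff_forall_mem_open]
    rintro z ⟨x, rfl⟩
    obtain ⟨K, hKc, hKn⟩ := exists_compact_mem_nhds x
    refine ⟨Sum.inl '' interior K ∪ Sum.inr ''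
      {q : AbstractBoundary n M | q.Attached (interior K)}, ?_, ?_, ?_⟩
    · rintro z (⟨y, _, rfl⟩ | ⟨q, hq, rfl⟩)
      · exact ⟨y, rfl⟩
      · exfalso
        obtain ⟨b, ⟨p, hp⟩, _, hatt⟩ := hq
        have hpb : p ∈ b.env.bdry := b.subset_bdry (hp ▸ rfl)
        have hcl : p ∈ closure (b.env.embMap '' interior K) := by
          rw [mem_closure_iff]
          intro N hN hpN
          exact hatt N hN (by rw [hp]; simpa using hpN)
        have hcont : Continuous b.env.embMap := b.env.isEmbedding.continuous
        have hcomp : IsCompact (b.env.embMap '' K) := hKc.image hcont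
        have hsub : closure (b.env.embMap '' interior K) ⊆ b.env.embMap '' K :=
          closure_minimal (Set.image_mono interior_subset) hcomp.isClosed
        exact hpb.2 (Set.image_subset_range _ _ (hsub hcl))
    · apply TopologicalSpace.isOpen_generateFrom_of_mem
      exact Or.inl ⟨interior K, isOpen_interior, ⟨x, mem_interior_iff_mem_nhds.2 hKn⟩, rfl⟩
    · exact Or.inl ⟨x, mem_interior_iff_mem_nhds.2 hKn, rfl⟩
  have hclosed : IsClosed (Set.range (Sum.inl : M → M ⊕ AbstractBoundary n M)) := by
    rw [← isOpen_compl_iff]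
    have : (Set.range (Sum.inl : M → M ⊕ AbstractBoundary n M))ᶜ =
        Sum.inr '' Set.univ := by
      ext z; cases z with
      | inl x => simp
      | inr q => simp
    rw [this]
    exact TopologicalSpace.isOpen_generateFrom_of_mem (Or.inr ⟨Set.univ, rfl⟩)
  have hclos : closure (Set.range (Sum.inl : M → M ⊕ AbstractBoundary n M)) =
      Set.range (Sum.inl : M → M ⊕ AbstractBoundary n M) := hclosed.closure_eq
  refine ⟨hopen, hclosed, hclos, ?_, ?_⟩
  · rw [frontier, hclos, hopen.interior_eq, Set.diff_self]
  · intro ⟨q⟩ h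
    rw [hclos] at h
    have : (Sum.inr q : M ⊕ AbstractBoundary n M) ∈ Set.range Sum.inl := h ▸ Set.mem_univ _
    obtain ⟨x, hx⟩ := this
    exact Sum.inl_ne_inr hx
end

section
/- Let M be an n-dimensional, paracompact, connected, Hausdorff, smooth manifold with abstract boundary B(M) and M̄ = M ∪ B(M). Then the topological space (M̄, T_M̄), where T_M̄ is the attached point topology, is Hausdorff: any two distinct points of M̄ (two manifold points, a manifold point and an abstract boundary point, or two distinct abstract boundary points) have disjoint open neighbourhoods. -/
open scoped Manifold
open Topology

variable {n : ℕ} {M : Type} [TopologicalSpace M]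
  [ChartedSpace (EuclideanSpace ℝ (Fin n)) M]

lemma not_attached_of_compact_closure {U : Set M} (hc : IsCompact (closure U))
    (q : AbstractBoundary n M) : ¬ q.Attached U := by
  rintro ⟨b, ⟨p, hp⟩, -, hatt⟩
  have hpb : p ∈ b.env.bdry := b.subset_bdry (by rw [hp]; exact rfl)
  have hcont : Continuous b.env.embMap := b.env.isEmbedding.continuous
  have hK : IsCompact (b.env.embMap '' closure U) := hc.image hcont
  have hpn : p ∉ b.env.embMap '' closure U := by
    rintro ⟨x, -, hx⟩; exact hpb.2 ⟨x, hx⟩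
  obtain ⟨z, hz1, hz2⟩ := hatt (b.env.embMap '' closure U)ᶜ hK.isClosed.isOpen_compl
    (by rw [hp]; simpa using hpn)
  exact hz1 (Set.image_mono subset_closure hz2)

lemma exists_open_compact_closure (x : M) [IsManifold (𝓡 n) (⊤ : ℕ∞) M]
    [T2Space M] : ∃ U : Set M, IsOpen U ∧ x ∈ U ∧ IsCompact (closure U) := by
  have : LocallyCompactSpace M :=
    ChartedSpace.locallyCompactSpace (EuclideanSpace ℝ (Fin n)) M
  obtain ⟨K, hK, hKmem⟩ := exists_compact_mem_nhds x
  refine ⟨interior K, isOpen_interior, mem_interior_iff_mem_nhds.2 hKmem, ?_⟩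
  exact hK.of_isClosed_subset isClosed_closure
    (closure_minimal interior_subset hK.isClosed)

lemma isOpen_basic {A : Set (M ⊕ AbstractBoundary n M)} (h : A ∈ basisSets n M) :
    IsOpen[attachedTopology n M] A :=
  TopologicalSpace.GenerateOpen.basic _ h

lemma isOpen_inr_img (C : Set (AbstractBoundary n M)) :
    IsOpen[attachedTopology n M] (Sum.inr '' C) :=
  isOpen_basic (Or.inr ⟨C, rfl⟩)

lemma isOpen_chunk {U : Set M} (hU : IsOpen U) (hne : U.Nonempty) :
    IsOpen[attachedTopology n M]
      (Sum.inl '' U ∪ Sum.inr '' {q : AbstractBoundary n M | q.Attached U}) :=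
  isOpen_basic (Or.inl ⟨U, hU, hne, rfl⟩)

/-- The space `M̄ = M ∪ B(M)` with the attached point topology is Hausdorff: any two
distinct points of `M̄` have disjoint open neighbourhoods. -/
theorem attachedTopology_hausdorff (n : ℕ) (M : Type) [TopologicalSpace M]
    [ChartedSpace (EuclideanSpace ℝ (Fin n)) M] [IsManifold (𝓡 n) (⊤ : ℕ∞) M]
    [T2Space M] [ParacompactSpace M] [ConnectedSpace M] :
    ∀ x y : M ⊕ AbstractBoundary n M, x ≠ y →
      ∃ u v : Set (M ⊕ AbstractBoundary n M),
        IsOpen[attachedTopology n M] u ∧ IsOpen[attachedTopology n M] v ∧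
        x ∈ u ∧ y ∈ v ∧ u ∩ v = ∅ := by
  rintro (x | q) (y | q') hxy
  · -- two manifold points
    have hne : x ≠ y := fun h => hxy (by rw [h])
    obtain ⟨U0, V0, hU0, hV0, hxU0, hyV0, hUV0⟩ := t2_separation hne
    obtain ⟨Ux, hUxo, hxUx, hUxc⟩ := exists_open_compact_closure (n := n) x
    obtain ⟨Vy, hVyo, hyVy, hVyc⟩ := exists_open_compact_closure (n := n) y
    set U := U0 ∩ Ux
    set V := V0 ∩ Vy
    have hUc : IsCompact (closure U) := hUxc.of_isClosed_subset isClosed_closure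
      (closure_mono Set.inter_subset_right)
    have hVc : IsCompact (closure V) := hVyc.of_isClosed_subset isClosed_closure
      (closure_mono Set.inter_subset_right)
    refine ⟨_, _, isOpen_chunk (hU0.inter hUxo) ⟨x, hxU0, hxUx⟩,
      isOpen_chunk (hV0.inter hVyo) ⟨y, hyV0, hyVy⟩,
      Or.inl ⟨x, ⟨hxU0, hxUx⟩, rfl⟩, Or.inl ⟨y, ⟨hyV0, hyVy⟩, rfl⟩, ?_⟩
    ext z
    simp only [Set.mem_inter_iff, Set.mem_union, Set.mem_empty_iff_false, iff_false]
    rintro ⟨hz1 | hz1, hz2 | hz2⟩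
    · obtain ⟨a, haU, rfl⟩ := hz1
      obtain ⟨b, hbV, hab⟩ := hz2
      have : a = b := Sum.inl.inj hab.symm
      exact hUV0.le_bot ⟨haU.1, this ▸ hbV.1⟩
    · obtain ⟨a, -, rfl⟩ := hz1; obtain ⟨b, -, hab⟩ := hz2; exact nomatch hab
    · obtain ⟨a, -, rfl⟩ := hz1; obtain ⟨b, -, hab⟩ := hz2; exact nomatch hab
    · obtain ⟨a, haU, rfl⟩ := hz1
      exact not_attached_of_compact_closure hUc a haU
  · -- manifold point and boundary point
    obtain ⟨U, hUo, hxU, hUc⟩ := exists_open_compact_closure (n := n) x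
    refine ⟨_, Sum.inr '' {q'}, isOpen_chunk hUo ⟨x, hxU⟩, isOpen_inr_img _,
      Or.inl ⟨x, hxU, rfl⟩, ⟨q', rfl, rfl⟩, ?_⟩
    ext z
    simp only [Set.mem_inter_iff, Set.mem_union, Set.mem_empty_iff_false, iff_false]
    rintro ⟨hz1 | hz1, hz2⟩
    · obtain ⟨a, -, rfl⟩ := hz1; obtain ⟨b, -, hab⟩ := hz2; exact nomatch hab
    · obtain ⟨a, haU, rfl⟩ := hz1
      exact not_attached_of_compact_closure hUc a haU
  · -- boundary point and manifold point
    obtain ⟨U, hUo, hyU, hUc⟩ := exists_open_compact_closure (n := n) y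
    refine ⟨Sum.inr '' {q}, _, isOpen_inr_img _, isOpen_chunk hUo ⟨y, hyU⟩,
      ⟨q, rfl, rfl⟩, Or.inl ⟨y, hyU, rfl⟩, ?_⟩
    ext z
    simp only [Set.mem_inter_iff, Set.mem_union, Set.mem_empty_iff_false, iff_false]
    rintro ⟨hz1, hz2 | hz2⟩
    · obtain ⟨a, -, rfl⟩ := hz1; obtain ⟨b, -, hab⟩ := hz2; exact nomatch hab
    · obtain ⟨a, -, rfl⟩ := hz1
      obtain ⟨b, hbU, hab⟩ := hz2
      have : b = a := Sum.inr.inj hab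
      exact not_attached_of_compact_closure hUc a (this ▸ hbU)
  · -- two boundary points
    have hne : q ≠ q' := fun h => hxy (by rw [h])
    refine ⟨Sum.inr '' {q}, Sum.inr '' {q'}, isOpen_inr_img _, isOpen_inr_img _,
      ⟨q, rfl, rfl⟩, ⟨q', rfl, rfl⟩, ?_⟩
    ext z
    simp only [Set.mem_inter_iff, Set.mem_empty_iff_false, iff_false]
    rintro ⟨⟨a, ha, rfl⟩, ⟨b, hb, hab⟩⟩
    exact hne (ha.symm.trans (hb ▸ Sum.inr.inj hab).symm)
end

section
/- Let M be an n-dimensional, paracompact, connected, Hausdorff, smooth manifold with abstract boundary B(M) and M̄ = M ∪ B(M) equipped with the attached point topology. Then M̄ is first countable: for every point x ∈ M̄ there exists a sequence U₁, U₂, ... of open neighbourhoods of x such that every open neighbourhood V of x contains some U_i. -/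
open scoped Manifold
open Topology

variable {n : ℕ} {M : Type} [TopologicalSpace M]
  [ChartedSpace (EuclideanSpace ℝ (Fin n)) M]

private lemma bset_attached_mono {n : ℕ} {M : Type} [TopologicalSpace M]
    [ChartedSpace (EuclideanSpace ℝ (Fin n)) M] (b : BoundarySet n M)
    {U U' : Set M} (h : U ⊆ U') (hb : b.Attached U) : b.Attached U' := by
  intro N hN hBN
  obtain ⟨x, hx1, hx2⟩ := hb N hN hBN
  exact ⟨x, hx1, Set.image_mono h hx2⟩

private lemma attached_mono {n : ℕ} {M : Type} [TopologicalSpace M]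
    [ChartedSpace (EuclideanSpace ℝ (Fin n)) M] (q : AbstractBoundary n M)
    {U U' : Set M} (h : U ⊆ U') (hq : q.Attached U) : q.Attached U' := by
  obtain ⟨b, hb1, hb2, hb3⟩ := hq
  exact ⟨b, hb1, hb2, bset_attached_mono b h hb3⟩

private lemma key_lemma {n : ℕ} {M : Type} [TopologicalSpace M]
    [ChartedSpace (EuclideanSpace ℝ (Fin n)) M] {V : Set (M ⊕ AbstractBoundary n M)}
    (hV : TopologicalSpace.GenerateOpen (basisSets n M) V) :
    ∀ m : M, Sum.inl m ∈ V → ∃ W : Set M, IsOpen W ∧ m ∈ W ∧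
      Sum.inl '' W ∪ Sum.inr '' {q : AbstractBoundary n M | q.Attached W} ⊆ V := by
  induction hV with
  | basic A hA =>
    intro m hm
    rcases hA with ⟨U, hU, _, rfl⟩ | ⟨C, rfl⟩
    · have hmU : m ∈ U := by
        rcases hm with ⟨m', hm', h⟩ | ⟨q, _, h⟩
        · cases h; exact hm'
        · cases h
      exact ⟨U, hU, hmU, subset_rfl⟩
    · rcases hm with ⟨q, _, h⟩; cases h
  | univ =>
    intro m _
    exact ⟨Set.univ, isOpen_univ, trivial, Set.subset_univ _⟩
  | inter A B _ _ ihA ihB =>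
    intro m hm
    obtain ⟨W1, hW1, hm1, hs1⟩ := ihA m hm.1
    obtain ⟨W2, hW2, hm2, hs2⟩ := ihB m hm.2
    refine ⟨W1 ∩ W2, hW1.inter hW2, ⟨hm1, hm2⟩, ?_⟩
    intro x hx
    constructor
    · apply hs1
      rcases hx with ⟨m', hm', rfl⟩ | ⟨q, hq, rfl⟩
      · exact Or.inl ⟨m', hm'.1, rfl⟩
      · exact Or.inr ⟨q, attached_mono q Set.inter_subset_left hq, rfl⟩
    · apply hs2
      rcases hx with ⟨m', hm', rfl⟩ | ⟨q, hq, rfl⟩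
      · exact Or.inl ⟨m', hm'.2, rfl⟩
      · exact Or.inr ⟨q, attached_mono q Set.inter_subset_right hq, rfl⟩
  | sUnion S _ ih =>
    intro m hm
    obtain ⟨t, htS, hmt⟩ := hm
    obtain ⟨W, hW, hmW, hs⟩ := ih t htS m hmt
    exact ⟨W, hW, hmW, hs.trans (Set.subset_sUnion_of_mem htS)⟩

private lemma firstCountable_of_charted {n : ℕ} {M : Type} [TopologicalSpace M]
    [ChartedSpace (EuclideanSpace ℝ (Fin n)) M] :
    FirstCountableTopology M := by
  constructor
  intro x
  have h := (chartAt (EuclideanSpace ℝ (Fin n)) x).symm_map_nhds_eq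
    (mem_chart_source _ x)
  rw [← h]
  infer_instance

/-- The space `M̄ = M ∪ B(M)` with the attached point topology is first countable:
every point has a sequence of open neighbourhoods such that every open neighbourhood
of the point contains some member of the sequence. -/
theorem attachedTopology_first_countable (n : ℕ) (M : Type) [TopologicalSpace M]
    [ChartedSpace (EuclideanSpace ℝ (Fin n)) M] [IsManifold (𝓡 n) (⊤ : ℕ∞) M]
    [T2Space M] [ParacompactSpace M] [ConnectedSpace M] :
    ∀ x : M ⊕ AbstractBoundary n M,
      ∃ U : ℕ → Set (M ⊕ AbstractBoundary n M),
        (∀ i : ℕ, IsOpen[attachedTopology n M] (U i) ∧ x ∈ U i) ∧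
        ∀ V : Set (M ⊕ AbstractBoundary n M),
          IsOpen[attachedTopology n M] V → x ∈ V → ∃ i : ℕ, U i ⊆ V := by
  
  intro x
  cases x with
  | inr q =>
    refine ⟨fun _ => Sum.inr '' {q}, fun i => ⟨?_, ⟨q, rfl, rfl⟩⟩, fun V _ hV => ⟨0, ?_⟩⟩
    · exact TopologicalSpace.GenerateOpen.basic _ (Or.inr ⟨{q}, rfl⟩)
    · rintro y ⟨q', hq', rfl⟩
      rcases hq' with rfl
      exact hV
  | inl m =>
    haveI : FirstCountableTopology M := firstCountable_of_charted (n := n)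
    obtain ⟨s, hs⟩ := (𝓝 m).exists_antitone_basis
    refine ⟨fun i => Sum.inl '' interior (s i) ∪
        Sum.inr '' {q : AbstractBoundary n M | q.Attached (interior (s i))},
      fun i => ⟨?_, Or.inl ⟨m, mem_interior_iff_mem_nhds.2 (hs.mem i), rfl⟩⟩,
      fun V hV hmV => ?_⟩
    · exact TopologicalSpace.GenerateOpen.basic _
        (Or.inl ⟨interior (s i), isOpen_interior,
          ⟨m, mem_interior_iff_mem_nhds.2 (hs.mem i)⟩, rfl⟩)
    · obtain ⟨W, hW, hmW, hsub⟩ := key_lemma hV m hmV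
      obtain ⟨i, hi⟩ := hs.mem_iff.1 (hW.mem_nhds hmW)
      refine ⟨i, ?_⟩
      intro y hy
      apply hsub
      have hiw : interior (s i) ⊆ W := (interior_subset.trans hi)
      rcases hy with ⟨m', hm', rfl⟩ | ⟨q, hq, rfl⟩
      · exact Or.inl ⟨m', hiw hm', rfl⟩
      · exact Or.inr ⟨q, attached_mono q hiw hq, rfl⟩
end
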